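/- arXiv:1801.07504 — 4 statements merged into one kernel-verified Lean document; each statement's English description precedes it below -/
import Mathlib

section
/- Rota's formula for Galois connections: let P and Q be locally finite posets and let f : P → Q, g : Q → P form a Galois connection in the sense that f(p) ≤ q if and only if p ≤ g(q). Then for all p ∈ P and q ∈ Q: Σ_{p' ≥ p, f(p') = q} μ_P(p, p') = Σ_{q' ≤ q, g(q') = p} μ_Q(q', q), where μ_P and μ_Q are the Möbius functions of P and Q. -/
open scoped Classical

/-!
Both sides are the two iterated forms of the double sum of `μ_P(p, p') μ_Q(q', q)` over the pairs
with `p ≤ p'`, `f p' ≤ q' ≤ q`, which by the adjunction are the pairs with `p ≤ p' ≤ g q'`,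
`q' ≤ q`. Summing over `q'` first, `∑_{f p' ≤ q' ≤ q} μ_Q(q', q)` is the indicator of `f p' = q`;
summing over `p'` first, `∑_{p ≤ p' ≤ g q'} μ_P(p, p')` is the indicator of `g q' = p`.
-/

open Finset IncidenceAlgebra

namespace GaloisConnection

variable {P Q : Type*} [PartialOrder P] [PartialOrder Q] {f : P → Q} {g : Q → P}

theorem setOf_le_and_l_eq [LocallyFiniteOrder P] (hgc : GaloisConnection f g) (p : P) (q : Q) :
    {p' | p ≤ p' ∧ f p' = q} = ↑{p' ∈ Icc p (g q) | f p' = q} := by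
  ext p'
  simp only [coe_filter, mem_Icc, Set.mem_ofPred_eq]
  constructor
  · rintro ⟨hpp', rfl⟩
    exact ⟨⟨hpp', hgc.le_u_l p'⟩, rfl⟩
  · rintro ⟨⟨hpp', -⟩, hfp'⟩
    exact ⟨hpp', hfp'⟩

theorem setOf_le_and_u_eq [LocallyFiniteOrder Q] (hgc : GaloisConnection f g) (p : P) (q : Q) :
    {q' | q' ≤ q ∧ g q' = p} = ↑{q' ∈ Icc (f p) q | g q' = p} := by
  ext q'
  simp only [coe_filter, mem_Icc, Set.mem_ofPred_eq]
  constructor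
  · rintro ⟨hq'q, rfl⟩
    exact ⟨⟨hgc.l_u_le q', hq'q⟩, rfl⟩
  · rintro ⟨⟨-, hq'q⟩, hgq'⟩
    exact ⟨hq'q, hgq'⟩

theorem mem_Icc_and_mem_Icc_iff [LocallyFiniteOrder P] [LocallyFiniteOrder Q]
    (hgc : GaloisConnection f g) (p : P) (q : Q) (p' : P) (q' : Q) :
    p' ∈ Icc p (g q) ∧ q' ∈ Icc (f p') q ↔ p' ∈ Icc p (g q') ∧ q' ∈ Icc (f p) q := by
  simp only [mem_Icc, ← hgc.le_iff_le]
  constructor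
  · rintro ⟨⟨hpp', -⟩, hfp'q', hq'q⟩
    exact ⟨⟨hpp', hfp'q'⟩, (hgc.monotone_l hpp').trans hfp'q', hq'q⟩
  · rintro ⟨⟨hpp', hfp'q'⟩, -, hq'q⟩
    exact ⟨⟨hpp', hfp'q'.trans hq'q⟩, hfp'q', hq'q⟩

end GaloisConnection

theorem rota_formula_galois_connection_general
    {P Q : Type*} [PartialOrder P] [PartialOrder Q]
    [LocallyFiniteOrder P] [LocallyFiniteOrder Q]
    (f : P → Q) (g : Q → P) (hgc : GaloisConnection f g)
    (p : P) (q : Q) :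
    (∑ᶠ p' ∈ {p' : P | p ≤ p' ∧ f p' = q}, IncidenceAlgebra.mu ℚ p p') =
      ∑ᶠ q' ∈ {q' : Q | q' ≤ q ∧ g q' = p}, IncidenceAlgebra.mu ℚ q' q := by
  rw [hgc.setOf_le_and_l_eq, hgc.setOf_le_and_u_eq, finsum_mem_coe_finset, finsum_mem_coe_finset]
  calc ∑ p' ∈ Icc p (g q) with f p' = q, mu ℚ p p'
      = ∑ p' ∈ Icc p (g q), ∑ q' ∈ Icc (f p') q, mu ℚ p p' * mu ℚ q' q := by
        simp_rw [← mul_sum, sum_Icc_mu_left, mul_ite, mul_one, mul_zero, sum_filter]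
    _ = ∑ q' ∈ Icc (f p) q, ∑ p' ∈ Icc p (g q'), mu ℚ p p' * mu ℚ q' q :=
        sum_comm' (hgc.mem_Icc_and_mem_Icc_iff p q)
    _ = ∑ q' ∈ Icc (f p) q with g q' = p, mu ℚ q' q := by
        simp_rw [← sum_mul, sum_Icc_mu_right, ite_mul, one_mul, zero_mul, sum_filter, eq_comm]

/-- Rota's formula for Galois connections between locally finite posets:
`Σ_{p' ≥ p, f p' = q} μ_P(p, p') = Σ_{q' ≤ q, g q' = p} μ_Q(q', q)`. -/
theorem rota_formula_galois_connection
    {P Q : Type*} [PartialOrder P] [PartialOrder Q]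
    [LocallyFiniteOrder P] [LocallyFiniteOrder Q]
    (f : P → Q) (g : Q → P) (hgc : GaloisConnection f g)
    (p : P) (q : Q)
    (h₁ : {p' : P | p ≤ p' ∧ f p' = q}.Finite)
    (h₂ : {q' : Q | q' ≤ q ∧ g q' = p}.Finite) :
    (∑ᶠ p' ∈ {p' : P | p ≤ p' ∧ f p' = q}, IncidenceAlgebra.mu ℚ p p') =
      ∑ᶠ q' ∈ {q' : Q | q' ≤ q ∧ g q' = p}, IncidenceAlgebra.mu ℚ q' q :=
  rota_formula_galois_connection_general f g hgc p q
end

section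
/- Rota's formula for Möbius categories: let X and Y be Möbius categories and F : X → Y, G : Y → X an adjunction F ⊣ G. Then for all objects x of X and y of Y: Σ_{f : x → x', Fx' = y} μ_X(f) = Σ_{g : y' → y, Gy' = x} μ_Y(g), where μ denotes the Möbius function of the respective incidence algebra. -/
open CategoryTheory
open scoped Classical

/-- The set of morphisms of a category, as a sigma type. -/
abbrev Mor (C : Type u) [SmallCategory C] : Type u := Σ x : C, Σ z : C, x ⟶ z

/-- Two-step factorisations of a morphism. -/
abbrev TwoStepFact {C : Type u} [SmallCategory C] (m : Mor C) : Type u :=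
  Σ y : C, { p : (m.1 ⟶ y) × (y ⟶ m.2.1) // p.1 ≫ p.2 = m.2.2 }

/-- Convolution product in the incidence algebra of a category. -/
noncomputable def conv {C : Type u} [SmallCategory C] (α β : Mor C → ℚ) : Mor C → ℚ :=
  fun m => ∑ᶠ p : TwoStepFact m,
    α ⟨m.1, p.1, p.2.1.1⟩ * β ⟨p.1, m.2.1, p.2.1.2⟩

/-- The convolution unit: `δ f = 1` on identities and `0` elsewhere. -/
noncomputable def convUnit (C : Type u) [SmallCategory C] : Mor C → ℚ :=
  fun m => if ∃ x : C, m = ⟨x, x, 𝟙 x⟩ then 1 else 0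

/-- The zeta function, constantly `1` on all morphisms. -/
def zetaFn (C : Type u) [SmallCategory C] : Mor C → ℚ := fun _ => 1


section AuxLemmas

variable {C : Type u} [SmallCategory C]

lemma Mor.hom_eq {a b : C} {m m' : a ⟶ b} (h : (⟨a, b, m⟩ : Mor C) = ⟨a, b, m'⟩) :
    m = m' := by
  injection h with h1 h2
  injection h2

lemma convUnit_exists {a b : C} {m : a ⟶ b} (h : convUnit C ⟨a, b, m⟩ ≠ 0) :
    ∃ c : C, (⟨a, b, m⟩ : Mor C) = ⟨c, c, 𝟙 c⟩ := by
  by_contra hc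
  simp only [convUnit, if_neg hc, ne_eq, not_true_eq_false] at h

lemma convUnit_obj_eq {a b : C} {m : a ⟶ b} (h : convUnit C ⟨a, b, m⟩ ≠ 0) : a = b := by
  obtain ⟨c, hc⟩ := convUnit_exists h
  have h1 : a = c := congrArg (fun z : Mor C => z.1) hc
  have h2 : b = c := congrArg (fun z : Mor C => z.2.1) hc
  exact h1.trans h2.symm

lemma convUnit_unique {a b : C} {m m' : a ⟶ b} (h : convUnit C ⟨a, b, m⟩ ≠ 0)
    (h' : convUnit C ⟨a, b, m'⟩ ≠ 0) : m = m' := by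
  obtain ⟨c, hc⟩ := convUnit_exists h
  obtain ⟨c', hc'⟩ := convUnit_exists h'
  have h1 : a = c := congrArg (fun z : Mor C => z.1) hc
  have h1' : a = c' := congrArg (fun z : Mor C => z.1) hc'
  rw [← h1] at hc
  rw [← h1'] at hc'
  exact Mor.hom_eq (hc.trans hc'.symm)

lemma convUnit_support_finite (a b : C) :
    (Function.support fun m : a ⟶ b => convUnit C ⟨a, b, m⟩).Finite := by
  apply Set.Subsingleton.finite
  intro m hm m' hm'
  exact convUnit_unique hm hm'

lemma finsum_convUnit (a b : C) :
    (∑ᶠ m : a ⟶ b, convUnit C ⟨a, b, m⟩) = if a = b then 1 else 0 := by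
  by_cases hab : a = b
  · subst hab
    rw [if_pos rfl]
    have key : ∀ m : a ⟶ a, convUnit C ⟨a, a, m⟩ = if m = 𝟙 a then 1 else 0 := by
      intro m
      by_cases hm : m = 𝟙 a
      · subst hm
        have hex : ∃ c : C, (⟨a, a, 𝟙 a⟩ : Mor C) = ⟨c, c, 𝟙 c⟩ := ⟨a, rfl⟩
        simp [convUnit, hex]
      · rw [if_neg hm]
        simp only [convUnit, ite_eq_right_iff]
        rintro ⟨c, hc⟩
        have h1 : a = c := congrArg (fun z : Mor C => z.1) hc
        rw [← h1] at hc
        exact absurd (Mor.hom_eq hc) hm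
    rw [finsum_congr key]
    rw [finsum_eq_single _ (𝟙 a) (fun m hm => if_neg hm)]
    exact if_pos rfl
  · rw [if_neg hab]
    apply finsum_eq_zero_of_forall_eq_zero
    intro m
    by_contra h
    exact hab (convUnit_obj_eq h)

lemma finsum_sigma_eq {B : Type v} {S : B → Type w} (h : (Σ b : B, S b) → ℚ)
    (hfin : (Function.support h).Finite) :
    (∑ᶠ i : Σ b : B, S b, h i) = ∑ᶠ b : B, ∑ᶠ s : S b, h ⟨b, s⟩ := by
  classical
  have hfib : ∀ b : B, (Function.support fun s : S b => h ⟨b, s⟩).Finite := by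
    intro b
    have heq : (Function.support fun s : S b => h ⟨b, s⟩) =
        (fun s : S b => (⟨b, s⟩ : Σ b, S b)) ⁻¹' (Function.support h) := rfl
    rw [heq]
    exact Set.Finite.preimage (sigma_mk_injective.injOn) hfin
  have h1 : (∑ᶠ i : Σ b : B, S b, h i) =
      ∑ i ∈ (hfin.image Sigma.fst).toFinset.sigma fun b => (hfib b).toFinset, h i := by
    apply finsum_eq_finset_sum_of_support_subset
    intro i hi
    rcases i with ⟨b, s⟩
    simp only [Finset.coe_sigma, Set.mem_sigma_iff, Set.Finite.coe_toFinset]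
    exact ⟨⟨⟨b, s⟩, hi, rfl⟩, hi⟩
  have h2 : (∑ᶠ b : B, ∑ᶠ s : S b, h ⟨b, s⟩) =
      ∑ b ∈ (hfin.image Sigma.fst).toFinset, ∑ᶠ s : S b, h ⟨b, s⟩ := by
    apply finsum_eq_finset_sum_of_support_subset
    intro b hb
    have hex : ∃ s : S b, h ⟨b, s⟩ ≠ 0 := by
      by_contra hno
      push_neg at hno
      exact hb (finsum_eq_zero_of_forall_eq_zero hno)
    obtain ⟨s, hs⟩ := hex
    simp only [Set.Finite.coe_toFinset]
    exact ⟨⟨b, s⟩, hs, rfl⟩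
  have h3 : ∀ b : B, (∑ᶠ s : S b, h ⟨b, s⟩) = ∑ s ∈ (hfib b).toFinset, h ⟨b, s⟩ := by
    intro b
    apply finsum_eq_finset_sum_of_support_subset
    intro s hs
    simpa using hs
  rw [h1, h2, Finset.sum_sigma]
  exact Finset.sum_congr rfl fun b _ => (h3 b).symm

end AuxLemmas

section RotaSetup

open CategoryTheory

universe u v

variable {X : Type u} {Y : Type v} [SmallCategory X] [SmallCategory Y]
variable (F : X ⥤ Y) (G : Y ⥤ X) (adj : F ⊣ G) (x : X) (y : Y)

/-- Pairs `(x', f : x ⟶ x')` together with a morphism `F x' ⟶ y`. -/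
abbrev IdxL : Type (max u v) := Σ p : Σ x' : X, x ⟶ x', (F.obj p.1 ⟶ y)

/-- Pairs `(y', g : y' ⟶ y)` together with a morphism `x ⟶ G y'`. -/
abbrev IdxR : Type (max u v) := Σ q : Σ y' : Y, y' ⟶ y, (x ⟶ G.obj q.1)

/-- Flat version of `IdxL`: triples `(c, f : x ⟶ c, u : c ⟶ G y)`. -/
abbrev FlL : Type u := Σ c : X, (x ⟶ c) × (c ⟶ G.obj y)

/-- Flat version of `IdxR`: triples `(d, q : F x ⟶ d, g : d ⟶ y)`. -/
abbrev FlR : Type v := Σ d : Y, (F.obj x ⟶ d) × (d ⟶ y)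

/-- Mixed three-fold factorisation data. -/
abbrev TriFl : Type (max u v) := Σ c : X, Σ d : Y, (x ⟶ c) × (F.obj c ⟶ d) × (d ⟶ y)

/-- Composite `x ⟶ G y` associated to an element of `FlL`. -/
def cmpL (a : FlL G x y) : x ⟶ G.obj y := a.2.1 ≫ a.2.2

/-- Composite `x ⟶ G y` associated to an element of `FlR`. -/
def cmpR (b : FlR F x y) : x ⟶ G.obj y := adj.homEquiv x y (b.2.1 ≫ b.2.2)

/-- Composite `x ⟶ G y` associated to an element of `TriFl`. -/
def cmpT (v : TriFl F x y) : x ⟶ G.obj y :=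
  v.2.2.1 ≫ adj.homEquiv v.1 y (v.2.2.2.1 ≫ v.2.2.2.2)

/-- `FlL ≃ IdxL` via the adjunction. -/
noncomputable def eFlI : FlL G x y ≃ IdxL F x y where
  toFun a := ⟨⟨a.1, a.2.1⟩, (adj.homEquiv a.1 y).symm a.2.2⟩
  invFun i := ⟨i.1.1, (i.1.2, adj.homEquiv i.1.1 y i.2)⟩
  left_inv := by rintro ⟨c, f, u⟩; simp
  right_inv := by rintro ⟨⟨c, f⟩, m⟩; simp

/-- `FlR ≃ IdxR` via the adjunction. -/
noncomputable def eFlI' : FlR F x y ≃ IdxR G x y where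
  toFun b := ⟨⟨b.1, b.2.2⟩, adj.homEquiv x b.1 b.2.1⟩
  invFun j := ⟨j.1.1, ((adj.homEquiv x j.1.1).symm j.2, j.1.2)⟩
  left_inv := by rintro ⟨d, q, g⟩; simp
  right_inv := by rintro ⟨⟨d, g⟩, n⟩; simp

/-- The fibre of `cmpL` at `w` is the set of two-step factorisations of `w`. -/
noncomputable def eFibL (w : x ⟶ G.obj y) :
    {a : FlL G x y // cmpL G x y a = w} ≃ TwoStepFact (⟨x, G.obj y, w⟩ : Mor X) where
  toFun a := ⟨a.1.1, ⟨(a.1.2.1, a.1.2.2), a.2⟩⟩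
  invFun t := ⟨⟨t.1, (t.2.1.1, t.2.1.2)⟩, t.2.2⟩
  left_inv := by rintro ⟨⟨c, f, u⟩, ha⟩; rfl
  right_inv := by rintro ⟨c, ⟨⟨f, u⟩, h⟩⟩; rfl

/-- The fibre of `cmpR` at `w` is the set of two-step factorisations of the
transpose of `w`. -/
noncomputable def eFibR (w : x ⟶ G.obj y) :
    {b : FlR F x y // cmpR F G adj x y b = w} ≃
      TwoStepFact (⟨F.obj x, y, (adj.homEquiv x y).symm w⟩ : Mor Y) where
  toFun b := ⟨b.1.1, ⟨(b.1.2.1, b.1.2.2), ((adj.homEquiv x y).apply_eq_iff_eq_symm_apply).mp b.2⟩⟩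
  invFun t := ⟨⟨t.1, (t.2.1.1, t.2.1.2)⟩,
    ((adj.homEquiv x y).apply_eq_iff_eq_symm_apply).mpr t.2.2⟩
  left_inv := by rintro ⟨⟨d, q, g⟩, hb⟩; rfl
  right_inv := by rintro ⟨d, ⟨⟨q, g⟩, h⟩⟩; rfl

lemma condTriL (w : x ⟶ G.obj y)
    (z : Σ a : {a : FlL G x y // cmpL G x y a = w},
      TwoStepFact (⟨F.obj a.1.1, y, (adj.homEquiv a.1.1 y).symm a.1.2.2⟩ : Mor Y)) :
    cmpT F G adj x y ⟨z.1.1.1, z.2.1, (z.1.1.2.1, z.2.2.1.1, z.2.2.1.2)⟩ = w := by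
  obtain ⟨⟨⟨c, f, u⟩, ha⟩, ⟨d, ⟨⟨p, g⟩, hs⟩⟩⟩ := z
  change f ≫ u = w at ha
  change p ≫ g = (adj.homEquiv c y).symm u at hs
  show f ≫ adj.homEquiv c y (p ≫ g) = w
  rw [hs, Equiv.apply_symm_apply]
  exact ha

/-- Left half of the associativity equivalence. -/
noncomputable def eTriL (w : x ⟶ G.obj y) :
    (Σ a : {a : FlL G x y // cmpL G x y a = w},
      TwoStepFact (⟨F.obj a.1.1, y, (adj.homEquiv a.1.1 y).symm a.1.2.2⟩ : Mor Y)) ≃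
    {v : TriFl F x y // cmpT F G adj x y v = w} where
  toFun z := ⟨⟨z.1.1.1, z.2.1, (z.1.1.2.1, z.2.2.1.1, z.2.2.1.2)⟩, condTriL F G adj x y w z⟩
  invFun v := ⟨⟨⟨v.1.1, (v.1.2.2.1, adj.homEquiv v.1.1 y (v.1.2.2.2.1 ≫ v.1.2.2.2.2))⟩, v.2⟩,
    ⟨v.1.2.1, ⟨(v.1.2.2.2.1, v.1.2.2.2.2), (Equiv.symm_apply_apply _ _).symm⟩⟩⟩
  left_inv := by
    rintro ⟨⟨⟨c, f, u⟩, ha⟩, ⟨d, ⟨⟨p, g⟩, hs⟩⟩⟩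
    change F.obj c ⟶ d at p
    change d ⟶ y at g
    change p ≫ g = (adj.homEquiv c y).symm u at hs
    have h2 : adj.homEquiv c y (p ≫ g) = u := by rw [hs]; exact Equiv.apply_symm_apply _ _
    subst h2
    rfl
  right_inv := by
    rintro ⟨⟨c, d, ⟨f, p, g⟩⟩, hv⟩
    rfl

lemma condTriR (w : x ⟶ G.obj y)
    (z : Σ b : {b : FlR F x y // cmpR F G adj x y b = w},
      TwoStepFact (⟨x, G.obj b.1.1, adj.homEquiv x b.1.1 b.1.2.1⟩ : Mor X)) :
    cmpT F G adj x y
      ⟨z.2.1, z.1.1.1, (z.2.2.1.1, (adj.homEquiv z.2.1 z.1.1.1).symm z.2.2.1.2, z.1.1.2.2)⟩ = w := by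
  obtain ⟨⟨⟨d, q, g⟩, hb⟩, ⟨c, ⟨⟨f, r⟩, ht⟩⟩⟩ := z
  change x ⟶ c at f
  change c ⟶ G.obj d at r
  change f ≫ r = adj.homEquiv x d q at ht
  change adj.homEquiv x y (q ≫ g) = w at hb
  show f ≫ adj.homEquiv c y ((adj.homEquiv c d).symm r ≫ g) = w
  rw [Adjunction.homEquiv_naturality_right, Equiv.apply_symm_apply, ← Category.assoc, ht,
    ← Adjunction.homEquiv_naturality_right]
  exact hb

lemma condTriR₁ (w : x ⟶ G.obj y) (v : {v : TriFl F x y // cmpT F G adj x y v = w}) :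
    cmpR F G adj x y ⟨v.1.2.1, (F.map v.1.2.2.1 ≫ v.1.2.2.2.1, v.1.2.2.2.2)⟩ = w := by
  obtain ⟨⟨c, d, ⟨f, p, g⟩⟩, hv⟩ := v
  change f ≫ adj.homEquiv c y (p ≫ g) = w at hv
  show adj.homEquiv x y ((F.map f ≫ p) ≫ g) = w
  rw [Category.assoc, Adjunction.homEquiv_naturality_left]
  exact hv

/-- Right half of the associativity equivalence. -/
noncomputable def eTriR (w : x ⟶ G.obj y) :
    (Σ b : {b : FlR F x y // cmpR F G adj x y b = w},
      TwoStepFact (⟨x, G.obj b.1.1, adj.homEquiv x b.1.1 b.1.2.1⟩ : Mor X)) ≃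
    {v : TriFl F x y // cmpT F G adj x y v = w} where
  toFun z := ⟨⟨z.2.1, z.1.1.1, (z.2.2.1.1, (adj.homEquiv z.2.1 z.1.1.1).symm z.2.2.1.2,
      z.1.1.2.2)⟩, condTriR F G adj x y w z⟩
  invFun v := ⟨⟨⟨v.1.2.1, (F.map v.1.2.2.1 ≫ v.1.2.2.2.1, v.1.2.2.2.2)⟩,
      condTriR₁ F G adj x y w v⟩,
    ⟨v.1.1, ⟨(v.1.2.2.1, adj.homEquiv v.1.1 v.1.2.1 v.1.2.2.2.1),
      (Adjunction.homEquiv_naturality_left adj _ _).symm⟩⟩⟩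
  left_inv := by
    rintro ⟨⟨⟨d, q, g⟩, hb⟩, ⟨c, ⟨⟨f, r⟩, ht⟩⟩⟩
    change x ⟶ c at f
    change c ⟶ G.obj d at r
    change f ≫ r = adj.homEquiv x d q at ht
    have h1 : F.map f ≫ (adj.homEquiv c d).symm r = q := by
      have h2 := congrArg (adj.homEquiv x d).symm ht
      rw [Equiv.symm_apply_apply, Adjunction.homEquiv_naturality_left_symm] at h2
      exact h2
    subst h1
    simp only [Equiv.apply_symm_apply]
  right_inv := by
    rintro ⟨⟨c, d, ⟨f, p, g⟩⟩, hv⟩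
    simp only [Equiv.symm_apply_apply]

end RotaSetup

/-- Rota's formula for Möbius categories: given an adjunction `F ⊣ G` between Möbius
categories `X` and `Y`, for all `x : X`, `y : Y`:
`Σ_{f : x → x', Fx' = y} μ_X(f) = Σ_{g : y' → y, Gy' = x} μ_Y(g)`. -/
theorem rota_formula_mobius_categories
    {X : Type u} {Y : Type v} [SmallCategory X] [SmallCategory Y]
    (F : X ⥤ Y) (G : Y ⥤ X) (adj : F ⊣ G)
    (hlfX : ∀ m : Mor X, Finite (TwoStepFact m))
    (hlfY : ∀ m : Mor Y, Finite (TwoStepFact m))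
    (μX : Mor X → ℚ) (μY : Mor Y → ℚ)
    (hμX : conv (zetaFn X) μX = convUnit X ∧ conv μX (zetaFn X) = convUnit X)
    (hμY : conv (zetaFn Y) μY = convUnit Y ∧ conv μY (zetaFn Y) = convUnit Y)
    (x : X) (y : Y)
    (hfin₁ : {p : Σ x' : X, x ⟶ x' | F.obj p.1 = y}.Finite)
    (hfin₂ : {q : Σ y' : Y, y' ⟶ y | G.obj q.1 = x}.Finite) :
    (∑ᶠ p ∈ {p : Σ x' : X, x ⟶ x' | F.obj p.1 = y}, μX ⟨x, p.1, p.2⟩) =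
      ∑ᶠ q ∈ {q : Σ y' : Y, y' ⟶ y | G.obj q.1 = x}, μY ⟨q.1, y, q.2⟩ := by
  classical
  haveI : ∀ m : Mor X, Finite (TwoStepFact m) := hlfX
  haveI : ∀ m : Mor Y, Finite (TwoStepFact m) := hlfY
  haveI : ∀ w : x ⟶ G.obj y, Finite {a : FlL G x y // cmpL G x y a = w} := fun w => by
    haveI := hlfX ⟨x, G.obj y, w⟩
    exact Finite.of_equiv _ (eFibL G x y w).symm
  haveI : ∀ w : x ⟶ G.obj y, Finite {b : FlR F x y // cmpR F G adj x y b = w} := fun w => by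
    haveI := hlfY ⟨F.obj x, y, (adj.homEquiv x y).symm w⟩
    exact Finite.of_equiv _ (eFibR F G adj x y w).symm
  -- finiteness of the support of the left global family
  have hHLfin : (Function.support fun i : IdxL F x y =>
      μX ⟨x, i.1.1, i.1.2⟩ * convUnit Y ⟨F.obj i.1.1, y, i.2⟩).Finite := by
    apply Set.Finite.of_finite_image (f := Sigma.fst)
    · apply hfin₁.subset
      rintro p ⟨i, hi, rfl⟩
      exact convUnit_obj_eq (right_ne_zero_of_mul hi)
    · rintro ⟨p, m⟩ hp ⟨p', m'⟩ hp' (h : p = p')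
      subst h
      exact congrArg (Sigma.mk p)
        (convUnit_unique (right_ne_zero_of_mul hp) (right_ne_zero_of_mul hp'))
  -- finiteness of the support of the right global family
  have hHRfin : (Function.support fun j : IdxR G x y =>
      convUnit X ⟨x, G.obj j.1.1, j.2⟩ * μY ⟨j.1.1, y, j.1.2⟩).Finite := by
    apply Set.Finite.of_finite_image (f := Sigma.fst)
    · apply hfin₂.subset
      rintro q ⟨j, hj, rfl⟩
      exact (convUnit_obj_eq (left_ne_zero_of_mul hj)).symm
    · rintro ⟨q, n⟩ hq ⟨q', n'⟩ hq' (h : q = q')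
      subst h
      exact congrArg (Sigma.mk q)
        (convUnit_unique (left_ne_zero_of_mul hq) (left_ne_zero_of_mul hq'))
  have hKLfin : (Function.support fun a : FlL G x y =>
      μX ⟨x, a.1, a.2.1⟩ *
        convUnit Y ⟨F.obj a.1, y, (adj.homEquiv a.1 y).symm a.2.2⟩).Finite := by
    have hcomp : (fun a : FlL G x y =>
        μX ⟨x, a.1, a.2.1⟩ * convUnit Y ⟨F.obj a.1, y, (adj.homEquiv a.1 y).symm a.2.2⟩) =
        (fun i : IdxL F x y => μX ⟨x, i.1.1, i.1.2⟩ * convUnit Y ⟨F.obj i.1.1, y, i.2⟩) ∘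
          (eFlI F G adj x y) := rfl
    rw [hcomp, Function.support_comp_eq_preimage]
    exact Set.Finite.preimage ((eFlI F G adj x y).injective.injOn) hHLfin
  have hKRfin : (Function.support fun b : FlR F x y =>
      convUnit X ⟨x, G.obj b.1, adj.homEquiv x b.1 b.2.1⟩ * μY ⟨b.1, y, b.2.2⟩).Finite := by
    have hcomp : (fun b : FlR F x y =>
        convUnit X ⟨x, G.obj b.1, adj.homEquiv x b.1 b.2.1⟩ * μY ⟨b.1, y, b.2.2⟩) =
        (fun j : IdxR G x y => convUnit X ⟨x, G.obj j.1.1, j.2⟩ * μY ⟨j.1.1, y, j.1.2⟩) ∘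
          (eFlI' F G adj x y) := rfl
    rw [hcomp, Function.support_comp_eq_preimage]
    exact Set.Finite.preimage ((eFlI' F G adj x y).injective.injOn) hHRfin
  -- the key pointwise identity, via three-fold factorisations
  have core : ∀ w : x ⟶ G.obj y,
      (∑ᶠ a : {a : FlL G x y // cmpL G x y a = w},
        μX ⟨x, a.1.1, a.1.2.1⟩ *
          convUnit Y ⟨F.obj a.1.1, y, (adj.homEquiv a.1.1 y).symm a.1.2.2⟩) =
      ∑ᶠ b : {b : FlR F x y // cmpR F G adj x y b = w},
        convUnit X ⟨x, G.obj b.1.1, adj.homEquiv x b.1.1 b.1.2.1⟩ * μY ⟨b.1.1, y, b.1.2.2⟩ := by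
    intro w
    have left_eq :
        (∑ᶠ a : {a : FlL G x y // cmpL G x y a = w},
          μX ⟨x, a.1.1, a.1.2.1⟩ *
            convUnit Y ⟨F.obj a.1.1, y, (adj.homEquiv a.1.1 y).symm a.1.2.2⟩) =
        ∑ᶠ v : {v : TriFl F x y // cmpT F G adj x y v = w},
          μX ⟨x, v.1.1, v.1.2.2.1⟩ * μY ⟨v.1.2.1, y, v.1.2.2.2.2⟩ := by
      calc (∑ᶠ a : {a : FlL G x y // cmpL G x y a = w},
            μX ⟨x, a.1.1, a.1.2.1⟩ *
              convUnit Y ⟨F.obj a.1.1, y, (adj.homEquiv a.1.1 y).symm a.1.2.2⟩)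
          = ∑ᶠ a : {a : FlL G x y // cmpL G x y a = w},
              ∑ᶠ s : TwoStepFact
                (⟨F.obj a.1.1, y, (adj.homEquiv a.1.1 y).symm a.1.2.2⟩ : Mor Y),
                μX ⟨x, a.1.1, a.1.2.1⟩ * μY ⟨s.1, y, s.2.1.2⟩ := by
            apply finsum_congr
            intro a
            rw [← hμY.1]
            rw [show conv (zetaFn Y) μY
                  ⟨F.obj a.1.1, y, (adj.homEquiv a.1.1 y).symm a.1.2.2⟩ =
                ∑ᶠ s : TwoStepFact
                  (⟨F.obj a.1.1, y, (adj.homEquiv a.1.1 y).symm a.1.2.2⟩ : Mor Y),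
                  μY ⟨s.1, y, s.2.1.2⟩ from finsum_congr fun s => one_mul _]
            exact mul_finsum _ _
        _ = ∑ᶠ z : (Σ a : {a : FlL G x y // cmpL G x y a = w},
              TwoStepFact (⟨F.obj a.1.1, y, (adj.homEquiv a.1.1 y).symm a.1.2.2⟩ : Mor Y)),
              μX ⟨x, z.1.1.1, z.1.1.2.1⟩ * μY ⟨z.2.1, y, z.2.2.1.2⟩ :=
            (finsum_sigma_eq (fun z : (Σ a : {a : FlL G x y // cmpL G x y a = w},
              TwoStepFact (⟨F.obj a.1.1, y, (adj.homEquiv a.1.1 y).symm a.1.2.2⟩ : Mor Y)) =>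
                μX ⟨x, z.1.1.1, z.1.1.2.1⟩ * μY ⟨z.2.1, y, z.2.2.1.2⟩)
              (Set.toFinite _)).symm
        _ = ∑ᶠ v : {v : TriFl F x y // cmpT F G adj x y v = w},
              μX ⟨x, v.1.1, v.1.2.2.1⟩ * μY ⟨v.1.2.1, y, v.1.2.2.2.2⟩ :=
            finsum_comp_equiv (eTriL F G adj x y w)
              (f := fun v : {v : TriFl F x y // cmpT F G adj x y v = w} =>
                μX ⟨x, v.1.1, v.1.2.2.1⟩ * μY ⟨v.1.2.1, y, v.1.2.2.2.2⟩)
    have right_eq :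
        (∑ᶠ b : {b : FlR F x y // cmpR F G adj x y b = w},
          convUnit X ⟨x, G.obj b.1.1, adj.homEquiv x b.1.1 b.1.2.1⟩ *
            μY ⟨b.1.1, y, b.1.2.2⟩) =
        ∑ᶠ v : {v : TriFl F x y // cmpT F G adj x y v = w},
          μX ⟨x, v.1.1, v.1.2.2.1⟩ * μY ⟨v.1.2.1, y, v.1.2.2.2.2⟩ := by
      calc (∑ᶠ b : {b : FlR F x y // cmpR F G adj x y b = w},
            convUnit X ⟨x, G.obj b.1.1, adj.homEquiv x b.1.1 b.1.2.1⟩ *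
              μY ⟨b.1.1, y, b.1.2.2⟩)
          = ∑ᶠ b : {b : FlR F x y // cmpR F G adj x y b = w},
              ∑ᶠ t : TwoStepFact (⟨x, G.obj b.1.1, adj.homEquiv x b.1.1 b.1.2.1⟩ : Mor X),
                μX ⟨x, t.1, t.2.1.1⟩ * μY ⟨b.1.1, y, b.1.2.2⟩ := by
            apply finsum_congr
            intro b
            rw [← hμX.2]
            rw [show conv μX (zetaFn X) ⟨x, G.obj b.1.1, adj.homEquiv x b.1.1 b.1.2.1⟩ =
                ∑ᶠ t : TwoStepFact (⟨x, G.obj b.1.1, adj.homEquiv x b.1.1 b.1.2.1⟩ : Mor X),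
                  μX ⟨x, t.1, t.2.1.1⟩ from finsum_congr fun t => mul_one _]
            exact finsum_mul _ _
        _ = ∑ᶠ z : (Σ b : {b : FlR F x y // cmpR F G adj x y b = w},
              TwoStepFact (⟨x, G.obj b.1.1, adj.homEquiv x b.1.1 b.1.2.1⟩ : Mor X)),
              μX ⟨x, z.2.1, z.2.2.1.1⟩ * μY ⟨z.1.1.1, y, z.1.1.2.2⟩ :=
            (finsum_sigma_eq (fun z : (Σ b : {b : FlR F x y // cmpR F G adj x y b = w},
              TwoStepFact (⟨x, G.obj b.1.1, adj.homEquiv x b.1.1 b.1.2.1⟩ : Mor X)) =>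
                μX ⟨x, z.2.1, z.2.2.1.1⟩ * μY ⟨z.1.1.1, y, z.1.1.2.2⟩)
              (Set.toFinite _)).symm
        _ = ∑ᶠ v : {v : TriFl F x y // cmpT F G adj x y v = w},
              μX ⟨x, v.1.1, v.1.2.2.1⟩ * μY ⟨v.1.2.1, y, v.1.2.2.2.2⟩ :=
            finsum_comp_equiv (eTriR F G adj x y w)
              (f := fun v : {v : TriFl F x y // cmpT F G adj x y v = w} =>
                μX ⟨x, v.1.1, v.1.2.2.1⟩ * μY ⟨v.1.2.1, y, v.1.2.2.2.2⟩)
    exact left_eq.trans right_eq.symm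
  -- assembling the left-hand side
  have stepA : (∑ᶠ p ∈ {p : Σ x' : X, x ⟶ x' | F.obj p.1 = y}, μX ⟨x, p.1, p.2⟩) =
      ∑ᶠ i : IdxL F x y, μX ⟨x, i.1.1, i.1.2⟩ * convUnit Y ⟨F.obj i.1.1, y, i.2⟩ := by
    have e1 : ∀ p : Σ x' : X, x ⟶ x',
        (∑ᶠ m : F.obj p.1 ⟶ y, μX ⟨x, p.1, p.2⟩ * convUnit Y ⟨F.obj p.1, y, m⟩) =
          μX ⟨x, p.1, p.2⟩ * (if F.obj p.1 = y then 1 else 0) := by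
      intro p
      rw [← finsum_convUnit (F.obj p.1) y]
      exact (mul_finsum _ _).symm
    calc (∑ᶠ p ∈ {p : Σ x' : X, x ⟶ x' | F.obj p.1 = y}, μX ⟨x, p.1, p.2⟩)
        = ∑ p ∈ hfin₁.toFinset, μX ⟨x, p.1, p.2⟩ :=
          finsum_mem_eq_finite_toFinset_sum _ hfin₁
      _ = ∑ p ∈ hfin₁.toFinset, μX ⟨x, p.1, p.2⟩ * (if F.obj p.1 = y then 1 else 0) := by
          apply Finset.sum_congr rfl
          intro p hp
          rw [if_pos (by simpa using hp), mul_one]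
      _ = ∑ᶠ p : Σ x' : X, x ⟶ x',
            μX ⟨x, p.1, p.2⟩ * (if F.obj p.1 = y then 1 else 0) := by
          refine (finsum_eq_finset_sum_of_support_subset _ ?_).symm
          intro p hp
          have : F.obj p.1 = y := by
            by_contra h
            simp only [Function.mem_support, if_neg h, mul_zero, ne_eq, not_true_eq_false] at hp
          simpa using this
      _ = ∑ᶠ p : Σ x' : X, x ⟶ x',
            ∑ᶠ m : F.obj p.1 ⟶ y, μX ⟨x, p.1, p.2⟩ * convUnit Y ⟨F.obj p.1, y, m⟩ :=
          (finsum_congr e1).symm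
      _ = ∑ᶠ i : IdxL F x y, μX ⟨x, i.1.1, i.1.2⟩ * convUnit Y ⟨F.obj i.1.1, y, i.2⟩ :=
          (finsum_sigma_eq _ hHLfin).symm
  -- assembling the right-hand side
  have stepA' : (∑ᶠ q ∈ {q : Σ y' : Y, y' ⟶ y | G.obj q.1 = x}, μY ⟨q.1, y, q.2⟩) =
      ∑ᶠ j : IdxR G x y, convUnit X ⟨x, G.obj j.1.1, j.2⟩ * μY ⟨j.1.1, y, j.1.2⟩ := by
    have e1 : ∀ q : Σ y' : Y, y' ⟶ y,
        (∑ᶠ n : x ⟶ G.obj q.1, convUnit X ⟨x, G.obj q.1, n⟩ * μY ⟨q.1, y, q.2⟩) =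
          (if x = G.obj q.1 then 1 else 0) * μY ⟨q.1, y, q.2⟩ := by
      intro q
      rw [← finsum_convUnit x (G.obj q.1)]
      exact (finsum_mul _ _).symm
    calc (∑ᶠ q ∈ {q : Σ y' : Y, y' ⟶ y | G.obj q.1 = x}, μY ⟨q.1, y, q.2⟩)
        = ∑ q ∈ hfin₂.toFinset, μY ⟨q.1, y, q.2⟩ :=
          finsum_mem_eq_finite_toFinset_sum _ hfin₂
      _ = ∑ q ∈ hfin₂.toFinset, (if x = G.obj q.1 then 1 else 0) * μY ⟨q.1, y, q.2⟩ := by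
          apply Finset.sum_congr rfl
          intro q hq
          have : G.obj q.1 = x := by simpa using hq
          rw [if_pos this.symm, one_mul]
      _ = ∑ᶠ q : Σ y' : Y, y' ⟶ y,
            (if x = G.obj q.1 then 1 else 0) * μY ⟨q.1, y, q.2⟩ := by
          refine (finsum_eq_finset_sum_of_support_subset _ ?_).symm
          intro q hq
          have : x = G.obj q.1 := by
            by_contra h
            simp only [Function.mem_support, if_neg h, zero_mul, ne_eq, not_true_eq_false] at hq
          simpa using this.symm
      _ = ∑ᶠ q : Σ y' : Y, y' ⟶ y,
            ∑ᶠ n : x ⟶ G.obj q.1, convUnit X ⟨x, G.obj q.1, n⟩ * μY ⟨q.1, y, q.2⟩ :=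
          (finsum_congr e1).symm
      _ = ∑ᶠ j : IdxR G x y, convUnit X ⟨x, G.obj j.1.1, j.2⟩ * μY ⟨j.1.1, y, j.1.2⟩ :=
          (finsum_sigma_eq _ hHRfin).symm
  -- regrouping by the composite x ⟶ G y on the left
  have stepC : (∑ᶠ a : FlL G x y,
      μX ⟨x, a.1, a.2.1⟩ * convUnit Y ⟨F.obj a.1, y, (adj.homEquiv a.1 y).symm a.2.2⟩) =
      ∑ᶠ w : x ⟶ G.obj y, ∑ᶠ a : {a : FlL G x y // cmpL G x y a = w},
        μX ⟨x, a.1.1, a.1.2.1⟩ *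
          convUnit Y ⟨F.obj a.1.1, y, (adj.homEquiv a.1.1 y).symm a.1.2.2⟩ := by
    rw [← finsum_comp_equiv (Equiv.sigmaFiberEquiv (cmpL G x y))]
    apply finsum_sigma_eq
    exact Set.Finite.preimage ((Equiv.sigmaFiberEquiv (cmpL G x y)).injective.injOn) hKLfin
  -- regrouping by the composite x ⟶ G y on the right
  have stepC' : (∑ᶠ b : FlR F x y,
      convUnit X ⟨x, G.obj b.1, adj.homEquiv x b.1 b.2.1⟩ * μY ⟨b.1, y, b.2.2⟩) =
      ∑ᶠ w : x ⟶ G.obj y, ∑ᶠ b : {b : FlR F x y // cmpR F G adj x y b = w},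
        convUnit X ⟨x, G.obj b.1.1, adj.homEquiv x b.1.1 b.1.2.1⟩ * μY ⟨b.1.1, y, b.1.2.2⟩ := by
    rw [← finsum_comp_equiv (Equiv.sigmaFiberEquiv (cmpR F G adj x y))]
    apply finsum_sigma_eq
    exact Set.Finite.preimage ((Equiv.sigmaFiberEquiv (cmpR F G adj x y)).injective.injOn) hKRfin
  -- flat transfers
  have stepB : (∑ᶠ i : IdxL F x y,
      μX ⟨x, i.1.1, i.1.2⟩ * convUnit Y ⟨F.obj i.1.1, y, i.2⟩) =
      ∑ᶠ a : FlL G x y,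
        μX ⟨x, a.1, a.2.1⟩ * convUnit Y ⟨F.obj a.1, y, (adj.homEquiv a.1 y).symm a.2.2⟩ :=
    (finsum_comp_equiv (eFlI F G adj x y)).symm
  have stepB' : (∑ᶠ j : IdxR G x y,
      convUnit X ⟨x, G.obj j.1.1, j.2⟩ * μY ⟨j.1.1, y, j.1.2⟩) =
      ∑ᶠ b : FlR F x y,
        convUnit X ⟨x, G.obj b.1, adj.homEquiv x b.1 b.2.1⟩ * μY ⟨b.1, y, b.2.2⟩ :=
    (finsum_comp_equiv (eFlI' F G adj x y)).symm
  rw [stepA, stepB, stepC, finsum_congr core, ← stepC', ← stepB', ← stepA']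
end

section
/- Given an adjunction F : X ⇄ Y : G between small categories, the vector space spanned by 'mixed arrows' {(x, y, φ) : φ ∈ Hom_Y(Fx, y)} is simultaneously a left comodule over the incidence coalgebra of X via γ_l(φ : Fx → y) = Σ_{x → x', ψ : Fx' → y with ψ∘F(x→x') = φ} (x → x') ⊗ ψ, and a right comodule over the incidence coalgebra of Y via γ_r(φ : Fx → y) = Σ_{ψ : Fx → y', y' → y with (y'→y)∘ψ = φ} ψ ⊗ (y' → y); and these two coactions commute: (id ⊗ γ_r)∘γ_l = (γ_l ⊗ id)∘γ_r, making it a bicomodule. -/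
/-!
Evaluated on a basis vector `φ`, each of the three identities compares two double sums of
elementary tensors indexed by three-step factorisations of `φ` (arrow of `X`, mixed arrow, arrow
of `Y`), grouped in two different ways. Associativity of composition and functoriality of `F`
identify the two indexing types by an explicit bijection that matches the summands exactly.
-/

open CategoryTheory TensorProduct
open scoped Classical

variable {X Y : Type u} [SmallCategory X] [SmallCategory Y]

/-- Mixed arrows `φ : F x ⟶ y` of a functor `F : X ⥤ Y`. -/
abbrev Mixed (F : X ⥤ Y) : Type u := Σ x : X, Σ y : Y, F.obj x ⟶ y

/-- Left decompositions of a mixed arrow `φ : F x ⟶ y` into an arrow of `X` followed by a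
mixed arrow. -/
abbrev LDec {F : X ⥤ Y} (φ : Mixed F) : Type u :=
  Σ x' : X, Σ f : φ.1 ⟶ x', { ψ : F.obj x' ⟶ φ.2.1 // F.map f ≫ ψ = φ.2.2 }

/-- Right decompositions of a mixed arrow `φ : F x ⟶ y` into a mixed arrow followed by an
arrow of `Y`. -/
abbrev RDec {F : X ⥤ Y} (φ : Mixed F) : Type u :=
  Σ y' : Y, Σ ψ : F.obj φ.1 ⟶ y', { g : y' ⟶ φ.2.1 // ψ ≫ g = φ.2.2 }

noncomputable section

/-- Comultiplication of the incidence coalgebra of a category. -/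
def incComul (C : Type u) [SmallCategory C] :
    (Mor C →₀ ℚ) →ₗ[ℚ] (Mor C →₀ ℚ) ⊗[ℚ] (Mor C →₀ ℚ) :=
  Finsupp.lsum ℚ fun m => LinearMap.toSpanSingleton ℚ _
    (∑ᶠ p : TwoStepFact m,
      (Finsupp.single (⟨m.1, p.1, p.2.1.1⟩ : Mor C) (1 : ℚ)) ⊗ₜ[ℚ]
      (Finsupp.single (⟨p.1, m.2.1, p.2.1.2⟩ : Mor C) (1 : ℚ)))

/-- The left coaction `γ_l(φ) = Σ f ⊗ ψ` over decompositions `ψ ∘ F f = φ`. -/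
def coactL (F : X ⥤ Y) :
    (Mixed F →₀ ℚ) →ₗ[ℚ] (Mor X →₀ ℚ) ⊗[ℚ] (Mixed F →₀ ℚ) :=
  Finsupp.lsum ℚ fun φ => LinearMap.toSpanSingleton ℚ _
    (∑ᶠ d : LDec φ,
      (Finsupp.single (⟨φ.1, d.1, d.2.1⟩ : Mor X) (1 : ℚ)) ⊗ₜ[ℚ]
      (Finsupp.single (⟨d.1, φ.2.1, d.2.2.1⟩ : Mixed F) (1 : ℚ)))

/-- The right coaction `γ_r(φ) = Σ ψ ⊗ g` over decompositions `g ∘ ψ = φ`. -/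
def coactR (F : X ⥤ Y) :
    (Mixed F →₀ ℚ) →ₗ[ℚ] (Mixed F →₀ ℚ) ⊗[ℚ] (Mor Y →₀ ℚ) :=
  Finsupp.lsum ℚ fun φ => LinearMap.toSpanSingleton ℚ _
    (∑ᶠ d : RDec φ,
      (Finsupp.single (⟨φ.1, d.1, d.2.1⟩ : Mixed F) (1 : ℚ)) ⊗ₜ[ℚ]
      (Finsupp.single (⟨d.1, φ.2.1, d.2.2.1⟩ : Mor Y) (1 : ℚ)))

section FinsumAlgebra

variable {R M N : Type*} [CommSemiring R] [AddCommMonoid M] [AddCommMonoid N]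
  [Module R M] [Module R N]

theorem map_finsum_of_finite {G ι : Type*} [Finite ι] [FunLike G M N] [AddMonoidHomClass G M N]
    (g : G) (f : ι → M) : g (∑ᶠ i, f i) = ∑ᶠ i, g (f i) :=
  map_finsum g (Set.toFinite _)

theorem TensorProduct.tmul_finsum {ι : Type*} [Finite ι] (m : M) (f : ι → N) :
    m ⊗ₜ[R] (∑ᶠ i, f i) = ∑ᶠ i, m ⊗ₜ[R] f i :=
  map_finsum_of_finite (TensorProduct.mk R M N m) f

theorem TensorProduct.finsum_tmul {ι : Type*} [Finite ι] (f : ι → M) (n : N) :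
    (∑ᶠ i, f i) ⊗ₜ[R] n = ∑ᶠ i, f i ⊗ₜ[R] n :=
  map_finsum_of_finite ((TensorProduct.mk R M N).flip n) f

end FinsumAlgebra

section FinsumSigma

variable {M : Type*} [AddCommMonoid M] {ι : Type*} {κ : ι → Type*}

theorem finsum_finsum_eq_finsum_sigma [Finite ι] [∀ i, Finite (κ i)] (h : ∀ i, κ i → M) :
    ∑ᶠ i, ∑ᶠ j, h i j = ∑ᶠ s : Σ i, κ i, h s.1 s.2 := by
  have := Fintype.ofFinite ι
  have : ∀ i, Fintype (κ i) := fun i => Fintype.ofFinite _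
  simp only [finsum_eq_sum_of_fintype]
  rw [← Finset.univ_sigma_univ, Finset.sum_sigma]

theorem finsum_finsum_eq_of_sigmaEquiv {ι' : Type*} {κ' : ι' → Type*}
    [Finite ι] [∀ i, Finite (κ i)] [Finite ι'] [∀ i', Finite (κ' i')]
    {h : ∀ i, κ i → M} {h' : ∀ i', κ' i' → M} (e : (Σ i, κ i) ≃ Σ i', κ' i')
    (he : ∀ s, h s.1 s.2 = h' (e s).1 (e s).2) :
    ∑ᶠ i, ∑ᶠ j, h i j = ∑ᶠ i', ∑ᶠ j', h' i' j' := by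
  rw [finsum_finsum_eq_finsum_sigma, finsum_finsum_eq_finsum_sigma, ← finsum_comp_equiv e]
  exact finsum_congr he

end FinsumSigma

theorem Finsupp.lhom_ext_single_one {α R N : Type*} [CommSemiring R] [AddCommMonoid N]
    [Module R N] ⦃f g : (α →₀ R) →ₗ[R] N⦄ (h : ∀ a, f (single a 1) = g (single a 1)) :
    f = g :=
  Finsupp.lhom_ext' fun a => LinearMap.ext_ring (h a)

theorem incComul_single (C : Type u) [SmallCategory C] (m : Mor C) :
    incComul C (Finsupp.single m 1) =
      ∑ᶠ p : TwoStepFact m,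
        (Finsupp.single (⟨m.1, p.1, p.2.1.1⟩ : Mor C) (1 : ℚ)) ⊗ₜ[ℚ]
        (Finsupp.single (⟨p.1, m.2.1, p.2.1.2⟩ : Mor C) (1 : ℚ)) := by
  simp [incComul]

variable (F : X ⥤ Y)

theorem coactL_single (φ : Mixed F) :
    coactL F (Finsupp.single φ 1) =
      ∑ᶠ d : LDec φ,
        (Finsupp.single (⟨φ.1, d.1, d.2.1⟩ : Mor X) (1 : ℚ)) ⊗ₜ[ℚ]
        (Finsupp.single (⟨d.1, φ.2.1, d.2.2.1⟩ : Mixed F) (1 : ℚ)) := by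
  simp [coactL]

theorem coactR_single (φ : Mixed F) :
    coactR F (Finsupp.single φ 1) =
      ∑ᶠ d : RDec φ,
        (Finsupp.single (⟨φ.1, d.1, d.2.1⟩ : Mixed F) (1 : ℚ)) ⊗ₜ[ℚ]
        (Finsupp.single (⟨d.1, φ.2.1, d.2.2.1⟩ : Mor Y) (1 : ℚ)) := by
  simp [coactR]

def lDecTwoStepEquiv (φ : Mixed F) :
    (Σ d : LDec φ, TwoStepFact (⟨φ.1, d.1, d.2.1⟩ : Mor X)) ≃
      Σ d : LDec φ, LDec (⟨d.1, φ.2.1, d.2.2.1⟩ : Mixed F) where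
  toFun := fun ⟨⟨_, _, ψ, h⟩, ⟨x'', ⟨f, f'⟩, hff'⟩⟩ =>
    ⟨⟨x'', f, F.map f' ≫ ψ, by rw [← Category.assoc, ← F.map_comp, hff', h]⟩, ⟨_, f', ψ, rfl⟩⟩
  invFun := fun ⟨⟨_, f, _, h⟩, ⟨x', f', ψ, h'⟩⟩ =>
    ⟨⟨x', f ≫ f', ψ, by rw [F.map_comp, Category.assoc, h', h]⟩, ⟨_, ⟨f, f'⟩, rfl⟩⟩
  left_inv := by
    rintro ⟨⟨_, _, _, _⟩, _, ⟨f, f'⟩, hff'⟩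
    dsimp only at f f' hff' ⊢
    subst hff'
    rfl
  right_inv := by
    rintro ⟨⟨_, _, _, _⟩, _, f', ψ, h'⟩
    dsimp only at f' ψ h' ⊢
    subst h'
    rfl

def rDecTwoStepEquiv (φ : Mixed F) :
    (Σ r : RDec φ, TwoStepFact (⟨r.1, φ.2.1, r.2.2.1⟩ : Mor Y)) ≃
      Σ r : RDec φ, RDec (⟨φ.1, r.1, r.2.1⟩ : Mixed F) where
  toFun := fun ⟨⟨_, ψ, _, h⟩, ⟨y'', ⟨g'', g'⟩, hgg'⟩⟩ =>
    ⟨⟨y'', ψ ≫ g'', g', by rw [Category.assoc, hgg', h]⟩, ⟨_, ψ, g'', rfl⟩⟩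
  invFun := fun ⟨⟨_, _, g', h⟩, ⟨y', ψ, g'', h'⟩⟩ =>
    ⟨⟨y', ψ, g'' ≫ g', by rw [← Category.assoc, h', h]⟩, ⟨_, ⟨g'', g'⟩, rfl⟩⟩
  left_inv := by
    rintro ⟨⟨_, _, _, _⟩, _, ⟨g'', g'⟩, hgg'⟩
    dsimp only at g'' g' hgg' ⊢
    subst hgg'
    rfl
  right_inv := by
    rintro ⟨⟨_, _, _, _⟩, _, ψ, g'', h'⟩
    dsimp only at ψ g'' h' ⊢
    subst h'
    rfl

def lDecRDecEquiv (φ : Mixed F) :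
    (Σ d : LDec φ, RDec (⟨d.1, φ.2.1, d.2.2.1⟩ : Mixed F)) ≃
      Σ r : RDec φ, LDec (⟨φ.1, r.1, r.2.1⟩ : Mixed F) where
  toFun := fun ⟨⟨x', f, _, h⟩, ⟨y', ψ, g, h'⟩⟩ =>
    ⟨⟨y', F.map f ≫ ψ, g, by rw [Category.assoc, h', h]⟩, ⟨x', f, ψ, rfl⟩⟩
  invFun := fun ⟨⟨y', _, g, h⟩, ⟨x', f, ψ, h'⟩⟩ =>
    ⟨⟨x', f, ψ ≫ g, by rw [← Category.assoc, h', h]⟩, ⟨y', ψ, g, rfl⟩⟩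
  left_inv := by
    rintro ⟨⟨_, _, _, _⟩, _, ψ, g, h'⟩
    dsimp only at ψ g h' ⊢
    subst h'
    rfl
  right_inv := by
    rintro ⟨⟨_, _, _, _⟩, _, f, ψ, h'⟩
    dsimp only at f ψ h' ⊢
    subst h'
    rfl

theorem coactL_coassoc [∀ m : Mor X, Finite (TwoStepFact m)] [∀ φ : Mixed F, Finite (LDec φ)] :
    (TensorProduct.assoc ℚ (Mor X →₀ ℚ) (Mor X →₀ ℚ) (Mixed F →₀ ℚ)).toLinearMap ∘ₗ
        (LinearMap.rTensor (Mixed F →₀ ℚ) (incComul X)) ∘ₗ coactL F =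
      (LinearMap.lTensor (Mor X →₀ ℚ) (coactL F)) ∘ₗ coactL F := by
  refine Finsupp.lhom_ext_single_one fun φ => ?_
  simp only [LinearMap.comp_apply, coactL_single, incComul_single, map_finsum_of_finite,
    LinearMap.rTensor_tmul, LinearMap.lTensor_tmul, TensorProduct.finsum_tmul,
    TensorProduct.tmul_finsum, LinearEquiv.coe_coe, TensorProduct.assoc_tmul]
  exact finsum_finsum_eq_of_sigmaEquiv (lDecTwoStepEquiv F φ) fun _ => rfl

theorem coactR_coassoc [∀ m : Mor Y, Finite (TwoStepFact m)] [∀ φ : Mixed F, Finite (RDec φ)] :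
    (TensorProduct.assoc ℚ (Mixed F →₀ ℚ) (Mor Y →₀ ℚ) (Mor Y →₀ ℚ)).toLinearMap ∘ₗ
        (LinearMap.rTensor (Mor Y →₀ ℚ) (coactR F)) ∘ₗ coactR F =
      (LinearMap.lTensor (Mixed F →₀ ℚ) (incComul Y)) ∘ₗ coactR F := by
  refine Finsupp.lhom_ext_single_one fun φ => ?_
  simp only [LinearMap.comp_apply, coactR_single, incComul_single, map_finsum_of_finite,
    LinearMap.rTensor_tmul, LinearMap.lTensor_tmul, TensorProduct.finsum_tmul,
    TensorProduct.tmul_finsum, LinearEquiv.coe_coe, TensorProduct.assoc_tmul]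
  exact (finsum_finsum_eq_of_sigmaEquiv (rDecTwoStepEquiv F φ) fun _ => rfl).symm

theorem coactL_coactR_comm [∀ φ : Mixed F, Finite (LDec φ)] [∀ φ : Mixed F, Finite (RDec φ)] :
    (LinearMap.lTensor (Mor X →₀ ℚ) (coactR F)) ∘ₗ coactL F =
      (TensorProduct.assoc ℚ (Mor X →₀ ℚ) (Mixed F →₀ ℚ) (Mor Y →₀ ℚ)).toLinearMap ∘ₗ
        (LinearMap.rTensor (Mor Y →₀ ℚ) (coactL F)) ∘ₗ coactR F := by
  refine Finsupp.lhom_ext_single_one fun φ => ?_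
  simp only [LinearMap.comp_apply, coactL_single, coactR_single, map_finsum_of_finite,
    LinearMap.rTensor_tmul, LinearMap.lTensor_tmul, TensorProduct.finsum_tmul,
    TensorProduct.tmul_finsum, LinearEquiv.coe_coe, TensorProduct.assoc_tmul]
  exact finsum_finsum_eq_of_sigmaEquiv (lDecRDecEquiv F φ) fun _ => rfl

theorem mixed_arrows_bicomodule_general (F : X ⥤ Y)
    (hlfX : ∀ m : Mor X, Finite (TwoStepFact m))
    (hlfY : ∀ m : Mor Y, Finite (TwoStepFact m))
    (hL : ∀ φ : Mixed F, Finite (LDec φ))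
    (hR : ∀ φ : Mixed F, Finite (RDec φ)) :
    -- left comodule (coassociativity of `γ_l` over `Δ_X`)
    ((TensorProduct.assoc ℚ (Mor X →₀ ℚ) (Mor X →₀ ℚ) (Mixed F →₀ ℚ)).toLinearMap ∘ₗ
        (LinearMap.rTensor (Mixed F →₀ ℚ) (incComul X)) ∘ₗ coactL F =
      (LinearMap.lTensor (Mor X →₀ ℚ) (coactL F)) ∘ₗ coactL F) ∧
    -- right comodule (coassociativity of `γ_r` over `Δ_Y`)
    ((TensorProduct.assoc ℚ (Mixed F →₀ ℚ) (Mor Y →₀ ℚ) (Mor Y →₀ ℚ)).toLinearMap ∘ₗ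
        (LinearMap.rTensor (Mor Y →₀ ℚ) (coactR F)) ∘ₗ coactR F =
      (LinearMap.lTensor (Mixed F →₀ ℚ) (incComul Y)) ∘ₗ coactR F) ∧
    -- the coactions commute: `(id ⊗ γ_r)∘γ_l = (γ_l ⊗ id)∘γ_r`
    ((LinearMap.lTensor (Mor X →₀ ℚ) (coactR F)) ∘ₗ coactL F =
      (TensorProduct.assoc ℚ (Mor X →₀ ℚ) (Mixed F →₀ ℚ) (Mor Y →₀ ℚ)).toLinearMap ∘ₗ
        (LinearMap.rTensor (Mor Y →₀ ℚ) (coactL F)) ∘ₗ coactR F) :=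
  ⟨coactL_coassoc F, coactR_coassoc F, coactL_coactR_comm F⟩

/-- For an adjunction `F ⊣ G` (with the relevant finiteness), the span of mixed arrows is a
left comodule over the incidence coalgebra of `X`, a right comodule over that of `Y`, and the
two coactions commute, making it a bicomodule. -/
theorem mixed_arrows_bicomodule (F : X ⥤ Y) (G : Y ⥤ X) (adj : F ⊣ G)
    (hlfX : ∀ m : Mor X, Finite (TwoStepFact m))
    (hlfY : ∀ m : Mor Y, Finite (TwoStepFact m))
    (hL : ∀ φ : Mixed F, Finite (LDec φ))
    (hR : ∀ φ : Mixed F, Finite (RDec φ)) :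
    -- left comodule (coassociativity of `γ_l` over `Δ_X`)
    ((TensorProduct.assoc ℚ (Mor X →₀ ℚ) (Mor X →₀ ℚ) (Mixed F →₀ ℚ)).toLinearMap ∘ₗ
        (LinearMap.rTensor (Mixed F →₀ ℚ) (incComul X)) ∘ₗ coactL F =
      (LinearMap.lTensor (Mor X →₀ ℚ) (coactL F)) ∘ₗ coactL F) ∧
    -- right comodule (coassociativity of `γ_r` over `Δ_Y`)
    ((TensorProduct.assoc ℚ (Mixed F →₀ ℚ) (Mor Y →₀ ℚ) (Mor Y →₀ ℚ)).toLinearMap ∘ₗ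
        (LinearMap.rTensor (Mor Y →₀ ℚ) (coactR F)) ∘ₗ coactR F =
      (LinearMap.lTensor (Mixed F →₀ ℚ) (incComul Y)) ∘ₗ coactR F) ∧
    -- the coactions commute: `(id ⊗ γ_r)∘γ_l = (γ_l ⊗ id)∘γ_r`
    ((LinearMap.lTensor (Mor X →₀ ℚ) (coactR F)) ∘ₗ coactL F =
      (TensorProduct.assoc ℚ (Mor X →₀ ℚ) (Mixed F →₀ ℚ) (Mor Y →₀ ℚ)).toLinearMap ∘ₗ
        (LinearMap.rTensor (Mor Y →₀ ℚ) (coactL F)) ∘ₗ coactR F) :=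
  mixed_arrows_bicomodule_general F hlfX hlfY hL hR

end
end

section
/- Stability reduction lemma (1-categorical version): let B be a double category (bisimplicial set) which is Segal in both directions (rows and columns are nerves of categories). If the two squares relating B₀₀, B₀₁, B₁₀, B₁₁ — namely the square with maps d₀, e₀ and the square with maps d₁, e₁ — are pullbacks of sets, then every square of face maps d_k along e_l (except d_bot along e_top and d_top along e_bot) and every square of a face map along a degeneracy map is a pullback; i.e., B is stable. -/
open CategoryTheory SimplexCategory Opposite

universe u

/-- A commuting square of sets/types is a pullback. -/
def IsPullbackSq {A B C D : Type*} (t : A → B) (l : A → C) (r : B → D) (b : C → D) : Prop :=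
  (∀ a, r (t a) = b (l a)) ∧ ∀ (x : B) (y : C), r x = b y → ∃! a : A, t a = x ∧ l a = y

/-- A bisimplicial set. -/
abbrev BisimplicialSet : Type (u + 1) := SimplexCategoryᵒᵖ × SimplexCategoryᵒᵖ ⥤ Type u

/-- `B_{i,j}`. -/
def bOb (B : BisimplicialSet.{u}) (i j : ℕ) : Type u :=
  B.obj (op (SimplexCategory.mk i), op (SimplexCategory.mk j))

/-- Horizontal face map `d_k : B_{i,j+1} → B_{i,j}`. -/
def hface (B : BisimplicialSet.{u}) (i j : ℕ) (k : Fin (j + 2)) :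
    bOb B i (j + 1) → bOb B i j :=
  ⇑(B.map (𝟙 (op (SimplexCategory.mk i)), (SimplexCategory.δ k).op))

/-- Vertical face map `e_l : B_{i+1,j} → B_{i,j}`. -/
def vface (B : BisimplicialSet.{u}) (i j : ℕ) (l : Fin (i + 2)) :
    bOb B (i + 1) j → bOb B i j :=
  ⇑(B.map ((SimplexCategory.δ l).op, 𝟙 (op (SimplexCategory.mk j))))

/-- Horizontal degeneracy map `s_k : B_{i,j} → B_{i,j+1}`. -/
def hdeg (B : BisimplicialSet.{u}) (i j : ℕ) (k : Fin (j + 1)) :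
    bOb B i j → bOb B i (j + 1) :=
  ⇑(B.map (𝟙 (op (SimplexCategory.mk i)), (SimplexCategory.σ k).op))

/-- Vertical degeneracy map `t_l : B_{i,j} → B_{i+1,j}`. -/
def vdeg (B : BisimplicialSet.{u}) (i j : ℕ) (l : Fin (i + 1)) :
    bOb B i j → bOb B (i + 1) j :=
  ⇑(B.map ((SimplexCategory.σ l).op, 𝟙 (op (SimplexCategory.mk j))))

open Simplicial
namespace DSSRAux

theorem pb_transpose {A B C D : Type*} {t : A → B} {l : A → C} {r : B → D} {b : C → D}
    (h : IsPullbackSq t l r b) : IsPullbackSq l t b r := by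
  obtain ⟨hc, hu⟩ := h
  refine ⟨fun a => (hc a).symm, fun y x hxy => ?_⟩
  obtain ⟨a, ⟨ha1, ha2⟩, hau⟩ := hu x y hxy.symm
  exact ⟨a, ⟨ha2, ha1⟩, fun a' h' => hau a' ⟨h'.2, h'.1⟩⟩

theorem pb_of_bij_tb {A B C D : Type*} {t : A → B} {l : A → C} {r : B → D} {b : C → D}
    (hc : ∀ a, r (t a) = b (l a)) (ht : Function.Bijective t) (hb : Function.Bijective b) :
    IsPullbackSq t l r b := by
  refine ⟨hc, fun x y hxy => ?_⟩
  obtain ⟨a, rfl⟩ := ht.2 x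
  refine ⟨a, ⟨rfl, hb.1 (by rw [← hc]; exact hxy)⟩, fun a' h' => ht.1 h'.1⟩

theorem pb_of_bij_lr {A B C D : Type*} {t : A → B} {l : A → C} {r : B → D} {b : C → D}
    (hc : ∀ a, r (t a) = b (l a)) (hl : Function.Bijective l) (hr : Function.Bijective r) :
    IsPullbackSq t l r b :=
  pb_transpose (pb_of_bij_tb (fun a => (hc a).symm) hl hr)

theorem pb_paste {A B C D E F : Type*} {t₁ : A → B} {l : A → C} {m : B → D} {b₁ : C → D}
    {t₂ : B → E} {r : E → F} {b₂ : D → F} {T : A → E} {Bo : C → F}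
    (h₁ : IsPullbackSq t₁ l m b₁) (h₂ : IsPullbackSq t₂ m r b₂)
    (hT : ∀ a, T a = t₂ (t₁ a)) (hB : ∀ c, Bo c = b₂ (b₁ c)) :
    IsPullbackSq T l r Bo := by
  constructor
  · intro a; rw [hT, hB, h₂.1, h₁.1]
  · intro x y hxy
    obtain ⟨bb, ⟨hb1, hb2⟩, hbu⟩ := h₂.2 x (b₁ y) (by rw [← hB]; exact hxy)
    obtain ⟨a, ⟨ha1, ha2⟩, hau⟩ := h₁.2 bb y hb2
    refine ⟨a, ⟨by rw [hT, ha1, hb1], ha2⟩, ?_⟩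
    rintro a' ⟨h1', h2'⟩
    have : t₁ a' = bb := hbu (t₁ a') ⟨by rw [← hT]; exact h1', by rw [h₁.1, h2']⟩
    exact hau a' ⟨this, h2'⟩

theorem pb_cancel {A B C D E F : Type*} {t₁ : A → B} {l : A → C} {m : B → D} {b₁ : C → D}
    {t₂ : B → E} {r : E → F} {b₂ : D → F} {T : A → E} {Bo : C → F}
    (h₂ : IsPullbackSq t₂ m r b₂)
    (hT : ∀ a, T a = t₂ (t₁ a)) (hB : ∀ c, Bo c = b₂ (b₁ c))
    (houter : IsPullbackSq T l r Bo)
    (hcomm : ∀ a, m (t₁ a) = b₁ (l a)) :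
    IsPullbackSq t₁ l m b₁ := by
  refine ⟨hcomm, fun x y hxy => ?_⟩
  obtain ⟨a, ⟨ha1, ha2⟩, hau⟩ := houter.2 (t₂ x) y (by rw [h₂.1, hxy, hB])
  have hx : t₁ a = x := by
    obtain ⟨bb, hbb, hbu⟩ := h₂.2 (t₂ x) (m x) (h₂.1 x)
    have e1 : t₁ a = bb := hbu _ ⟨by rw [← hT]; exact ha1, by rw [hcomm, ha2, ← hxy]⟩
    have e2 : x = bb := hbu _ ⟨rfl, rfl⟩
    rw [e1, e2]
  exact ⟨a, ⟨hx, ha2⟩, fun a' h' => hau a' ⟨by rw [hT, h'.1], h'.2⟩⟩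



variable (B : BisimplicialSet.{u})

/-- The action of a pair of simplex-category morphisms on a bisimplicial set. -/
@[reducible] def M {p p' q q' : ℕ} (φ : mk p ⟶ ⦋p'⦌)
    (ψ : mk q ⟶ ⦋q'⦌) : bOb B p' q' → bOb B p q :=
  ⇑(B.map (φ.op, ψ.op))

theorem M_comp {p p' p'' q q' q'' : ℕ} (φ₁ : mk p ⟶ ⦋p'⦌)
    (φ₂ : mk p' ⟶ ⦋p''⦌) (ψ₁ : mk q ⟶ ⦋q'⦌)
    (ψ₂ : mk q' ⟶ ⦋q''⦌) (x : bOb B p'' q'') :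
    M B φ₁ ψ₁ (M B φ₂ ψ₂ x) = M B (φ₁ ≫ φ₂) (ψ₁ ≫ ψ₂) x := by
  show (B.map _ ≫ B.map _) x = _
  rw [← B.map_comp]
  rfl

theorem M_id {p q : ℕ} (x : bOb B p q) : M B (𝟙 (mk p)) (𝟙 (mk q)) x = x := by
  show B.map (𝟙 _) x = x
  rw [B.map_id]
  rfl

theorem M_hv {p p' q q' : ℕ} (φ : mk p ⟶ ⦋p'⦌)
    (ψ : mk q ⟶ ⦋q'⦌) (x : bOb B p' q') :
    M B (𝟙 (mk p)) ψ (M B φ (𝟙 (mk q')) x) = M B φ ψ x := by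
  rw [M_comp, Category.id_comp, Category.comp_id]

theorem M_vh {p p' q q' : ℕ} (φ : mk p ⟶ ⦋p'⦌)
    (ψ : mk q ⟶ ⦋q'⦌) (x : bOb B p' q') :
    M B φ (𝟙 (mk q)) (M B (𝟙 (mk p')) ψ x) = M B φ ψ x := by
  rw [M_comp, Category.id_comp, Category.comp_id]

theorem M_hh {p q q' q'' : ℕ} (ψ₁ : mk q ⟶ ⦋q'⦌)
    (ψ₂ : mk q' ⟶ ⦋q''⦌) (x : bOb B p q'') :
    M B (𝟙 (mk p)) ψ₁ (M B (𝟙 (mk p)) ψ₂ x) = M B (𝟙 (mk p)) (ψ₁ ≫ ψ₂) x := by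
  rw [M_comp, Category.id_comp]

theorem M_vv {p p' p'' q : ℕ} (φ₁ : mk p ⟶ ⦋p'⦌)
    (φ₂ : mk p' ⟶ ⦋p''⦌) (x : bOb B p'' q) :
    M B φ₁ (𝟙 (mk q)) (M B φ₂ (𝟙 (mk q)) x) = M B (φ₁ ≫ φ₂) (𝟙 (mk q)) x := by
  rw [M_comp, Category.id_comp]

/-- The square of `B`-maps associated to `φ` (vertical) and `ψ` (horizontal). -/
@[reducible] def Sq {p p' q q' : ℕ} (φ : mk p ⟶ ⦋p'⦌)
    (ψ : mk q ⟶ ⦋q'⦌) : Prop :=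
  IsPullbackSq (M B (𝟙 (mk p')) ψ) (M B φ (𝟙 (mk q'))) (M B φ (𝟙 (mk q))) (M B (𝟙 (mk p)) ψ)

theorem Sq_comm {p p' q q' : ℕ} (φ : mk p ⟶ ⦋p'⦌)
    (ψ : mk q ⟶ ⦋q'⦌) (x : bOb B p' q') :
    M B φ (𝟙 (mk q)) (M B (𝟙 (mk p')) ψ x) = M B (𝟙 (mk p)) ψ (M B φ (𝟙 (mk q')) x) :=
  (M_vh B φ ψ x).trans (M_hv B φ ψ x).symm

theorem Sq_idh {p p' q : ℕ} (φ : mk p ⟶ ⦋p'⦌) : Sq B φ (𝟙 (mk q)) := by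
  have hid : ∀ r : ℕ, Function.Bijective (M B (𝟙 (mk r)) (𝟙 (mk q))) := by
    intro r
    have : M B (𝟙 (mk r)) (𝟙 (mk q)) = id := funext (M_id B)
    rw [this]; exact Function.bijective_id
  exact pb_of_bij_tb (Sq_comm B φ (𝟙 (mk q))) (hid p') (hid p)

theorem Sq_idv {p q q' : ℕ} (ψ : mk q ⟶ ⦋q'⦌) : Sq B (𝟙 (mk p)) ψ := by
  have hid : ∀ r : ℕ, Function.Bijective (M B (𝟙 (mk p)) (𝟙 (mk r))) := by
    intro r
    have : M B (𝟙 (mk p)) (𝟙 (mk r)) = id := funext (M_id B)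
    rw [this]; exact Function.bijective_id
  exact pb_of_bij_lr (Sq_comm B (𝟙 (mk p)) ψ) (hid q') (hid q)

theorem Sq_hcomp {p p' q q' q'' : ℕ} {φ : mk p ⟶ ⦋p'⦌}
    {ψ₁ : mk q ⟶ ⦋q'⦌} {ψ₂ : mk q' ⟶ ⦋q''⦌}
    (h₁ : Sq B φ ψ₁) (h₂ : Sq B φ ψ₂) : Sq B φ (ψ₁ ≫ ψ₂) :=
  pb_paste h₂ h₁ (fun a => (M_hh B ψ₁ ψ₂ a).symm) (fun c => (M_hh B ψ₁ ψ₂ c).symm)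

theorem Sq_hcancel {p p' q q' q'' : ℕ} {φ : mk p ⟶ ⦋p'⦌}
    {ψ₁ : mk q ⟶ ⦋q'⦌} {ψ₂ : mk q' ⟶ ⦋q''⦌}
    (h₁ : Sq B φ ψ₁) (houter : Sq B φ (ψ₁ ≫ ψ₂)) : Sq B φ ψ₂ :=
  pb_cancel h₁ (fun a => (M_hh B ψ₁ ψ₂ a).symm) (fun c => (M_hh B ψ₁ ψ₂ c).symm) houter
    (Sq_comm B φ ψ₂)

theorem Sq_vcancel {p p' p'' q q' : ℕ} {φ₁ : mk p ⟶ ⦋p'⦌}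
    {φ₂ : mk p' ⟶ ⦋p''⦌} {ψ : mk q ⟶ ⦋q'⦌}
    (h₁ : Sq B φ₁ ψ) (houter : Sq B (φ₁ ≫ φ₂) ψ) : Sq B φ₂ ψ :=
  pb_transpose (pb_cancel (pb_transpose h₁)
    (fun a => (M_vv B φ₁ φ₂ a).symm) (fun c => (M_vv B φ₁ φ₂ c).symm)
    (pb_transpose houter) (fun a => (Sq_comm B φ₂ ψ a).symm))


/-- Face-face squares (with the two exclusions). -/
def FF (B : BisimplicialSet.{u}) (i j : ℕ) : Prop :=
  ∀ (k : Fin (j + 2)) (l : Fin (i + 2)),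
    ¬(k = 0 ∧ l = Fin.last (i + 1)) → ¬(k = Fin.last (j + 1) ∧ l = 0) →
    Sq B (δ l) (δ k)

/-- Row Segal condition, in `M` form. -/
def RowSegal (B : BisimplicialSet.{u}) : Prop :=
  ∀ r m : ℕ, IsPullbackSq
    (M B (𝟙 (mk r)) (δ (0 : Fin (m + 3)))) (M B (𝟙 (mk r)) (δ (Fin.last (m + 2))))
    (M B (𝟙 (mk r)) (δ (Fin.last (m + 1)))) (M B (𝟙 (mk r)) (δ (0 : Fin (m + 2))))

theorem stepJ (B : BisimplicialSet.{u}) (hrow : RowSegal B)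
    {i m : ℕ} (IH : FF B i m) : FF B i (m + 1) := by
  have S0 : ∀ l : Fin (i + 2), l ≠ Fin.last (i + 1) → Sq B (δ l) (δ (0 : Fin (m + 3))) := by
    intro l hl
    have F : Sq B (δ l) (δ (0 : Fin (m + 2))) :=
      IH 0 l (fun h => hl h.2) (fun h => by
        have := h.1; simp [Fin.ext_iff] at this)
    have X : IsPullbackSq
        (M B (δ l) (δ (Fin.last (m + 2)))) (M B (𝟙 (mk (i+1))) (δ (0 : Fin (m + 3))))
        (M B (𝟙 (mk i)) (δ (0 : Fin (m + 2)))) (M B (δ l) (δ (Fin.last (m + 1)))) :=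
      pb_paste (pb_transpose (hrow (i+1) m)) (pb_transpose F)
        (fun a => (M_vh B _ _ a).symm) (fun c => (M_vh B _ _ c).symm)
    have T : IsPullbackSq (M B (δ l) (𝟙 (mk (m+2)))) (M B (𝟙 (mk (i+1))) (δ (0 : Fin (m + 3))))
        (M B (𝟙 (mk i)) (δ (0 : Fin (m + 3)))) (M B (δ l) (𝟙 (mk (m+1)))) :=
      pb_cancel (pb_transpose (hrow i m))
        (fun a => (M_hv B _ _ a).symm) (fun c => (M_hv B _ _ c).symm) X
        (fun a => (M_hv B _ _ a).trans (M_vh B _ _ a).symm)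
    exact pb_transpose T
  have S1 : ∀ l : Fin (i + 2), l ≠ 0 → Sq B (δ l) (δ (Fin.last (m + 2))) := by
    intro l hl
    have F : Sq B (δ l) (δ (Fin.last (m + 1))) :=
      IH (Fin.last (m + 1)) l (fun h => by
        have := h.1; simp [Fin.ext_iff] at this) (fun h => hl h.2)
    have X : IsPullbackSq
        (M B (δ l) (δ (0 : Fin (m + 3)))) (M B (𝟙 (mk (i+1))) (δ (Fin.last (m + 2))))
        (M B (𝟙 (mk i)) (δ (Fin.last (m + 1)))) (M B (δ l) (δ (0 : Fin (m + 2)))) :=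
      pb_paste (hrow (i+1) m) (pb_transpose F)
        (fun a => (M_vh B _ _ a).symm) (fun c => (M_vh B _ _ c).symm)
    have T : IsPullbackSq (M B (δ l) (𝟙 (mk (m+2)))) (M B (𝟙 (mk (i+1))) (δ (Fin.last (m + 2))))
        (M B (𝟙 (mk i)) (δ (Fin.last (m + 2)))) (M B (δ l) (𝟙 (mk (m+1)))) :=
      pb_cancel (hrow i m)
        (fun a => (M_hv B _ _ a).symm) (fun c => (M_hv B _ _ c).symm) X
        (fun a => (M_hv B _ _ a).trans (M_vh B _ _ a).symm)
    exact pb_transpose T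
  intro k l e1 e2
  by_cases hl : l = Fin.last (i + 1)
  · have hk0 : k ≠ 0 := fun h => e1 ⟨h, hl⟩
    have hl0 : l ≠ 0 := by rw [hl]; simp [Fin.ext_iff]
    by_cases hkl : k = Fin.last (m + 2)
    · rw [hkl]; exact S1 l hl0
    · have key : δ (Fin.last (m + 1)) ≫ δ k = δ (k.castPred hkl) ≫ δ (Fin.last (m + 2)) := by
        have h := δ_comp_δ (n := m) (i := k.castPred hkl) (j := Fin.last (m + 1))
          (Fin.le_last _)
        rw [Fin.succ_last, Fin.castSucc_castPred] at h
        exact h.symm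
      have hout : Sq B (δ l) (δ (Fin.last (m + 1)) ≫ δ k) := by
        rw [key]
        exact Sq_hcomp B (IH (k.castPred hkl) l
          (fun h => hk0 (by rw [← Fin.castSucc_castPred k hkl, h.1, Fin.castSucc_zero]))
          (fun h => hl0 h.2)) (S1 l hl0)
      exact Sq_hcancel B (IH (Fin.last (m + 1)) l
        (fun h => by have := h.1; simp [Fin.ext_iff] at this) (fun h => hl0 h.2)) hout
  · by_cases hk0 : k = 0
    · rw [hk0]; exact S0 l hl
    · have key : δ (0 : Fin (m + 2)) ≫ δ k = δ (k.pred hk0) ≫ δ (0 : Fin (m + 3)) := by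
        have h := δ_comp_δ (n := m) (i := 0) (j := k.pred hk0) (Fin.zero_le _)
        rw [Fin.succ_pred, Fin.castSucc_zero] at h
        exact h
      have hout : Sq B (δ l) (δ (0 : Fin (m + 2)) ≫ δ k) := by
        rw [key]
        exact Sq_hcomp B (IH (k.pred hk0) l (fun h => hl h.2)
          (fun h => e2 ⟨by rw [← Fin.succ_pred k hk0, h.1, Fin.succ_last], h.2⟩)) (S0 l hl)
      exact Sq_hcancel B (IH 0 l (fun h => hl h.2)
        (fun h => by have := h.1; simp [Fin.ext_iff] at this)) hout


/-- Flip a bisimplicial set. -/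
@[reducible] def flipB (B : BisimplicialSet.{u}) : BisimplicialSet.{u} :=
  CategoryTheory.Prod.swap SimplexCategoryᵒᵖ SimplexCategoryᵒᵖ ⋙ B

theorem FF_flip {B : BisimplicialSet.{u}} {i j : ℕ} (h : FF B i j) : FF (flipB B) j i :=
  fun k l e1 e2 => pb_transpose (h l k (fun hh => e2 ⟨hh.2, hh.1⟩) (fun hh => e1 ⟨hh.2, hh.1⟩))

theorem FF_unflip {B : BisimplicialSet.{u}} {i j : ℕ} (h : FF (flipB B) j i) : FF B i j :=
  fun k l e1 e2 => pb_transpose (h l k (fun hh => e2 ⟨hh.2, hh.1⟩) (fun hh => e1 ⟨hh.2, hh.1⟩))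

theorem base (B : BisimplicialSet.{u})
    (h0 : IsPullbackSq (hface B 1 0 0) (vface B 0 1 0) (vface B 0 0 0) (hface B 0 0 0))
    (h1 : IsPullbackSq (hface B 1 0 1) (vface B 0 1 1) (vface B 0 0 1) (hface B 0 0 1)) :
    FF B 0 0 := by
  intro k l e1 e2
  fin_cases k <;> fin_cases l
  · exact h0
  · exact absurd ⟨rfl, by decide⟩ e1
  · exact absurd ⟨by decide, rfl⟩ e2
  · exact h1

theorem mainFF (B : BisimplicialSet.{u})
    (hrow : ∀ i m : ℕ, IsPullbackSq
      (hface B i (m + 1) 0) (hface B i (m + 1) (Fin.last (m + 2)))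
      (hface B i m (Fin.last (m + 1))) (hface B i m 0))
    (hcol : ∀ j m : ℕ, IsPullbackSq
      (vface B (m + 1) j 0) (vface B (m + 1) j (Fin.last (m + 2)))
      (vface B m j (Fin.last (m + 1))) (vface B m j 0))
    (h0 : IsPullbackSq (hface B 1 0 0) (vface B 0 1 0) (vface B 0 0 0) (hface B 0 0 0))
    (h1 : IsPullbackSq (hface B 1 0 1) (vface B 0 1 1) (vface B 0 0 1) (hface B 0 0 1)) :
    ∀ i j : ℕ, FF B i j := by
  have hrow' : RowSegal B := fun r m => hrow r m
  have hrowF : RowSegal (flipB B) := fun r m => hcol r m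
  have col : ∀ j, FF B 0 j := by
    intro j
    induction j with
    | zero => exact base B h0 h1
    | succ j ih => exact stepJ B hrow' ih
  intro i
  induction i with
  | zero => exact col
  | succ i ih =>
    intro j
    exact FF_unflip (stepJ (flipB B) hrowF (FF_flip (ih j)))

end DSSRAux

/-- Stability reduction lemma: if a double Segal set has the two basic squares
(`d₀`/`e₀` and `d₁`/`e₁` relating `B₀₀, B₀₁, B₁₀, B₁₁`) as pullbacks, then every face-face
square (except `d_⊥` along `e_⊤` and `d_⊤` along `e_⊥`) and every face/degeneracy and
degeneracy/degeneracy square is a pullback; i.e. `B` is stable. -/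
theorem double_segal_stability_reduction (B : BisimplicialSet.{u})
    -- rows are Segal
    (hrow : ∀ i m : ℕ, IsPullbackSq
      (hface B i (m + 1) 0) (hface B i (m + 1) (Fin.last (m + 2)))
      (hface B i m (Fin.last (m + 1))) (hface B i m 0))
    -- columns are Segal
    (hcol : ∀ j m : ℕ, IsPullbackSq
      (vface B (m + 1) j 0) (vface B (m + 1) j (Fin.last (m + 2)))
      (vface B m j (Fin.last (m + 1))) (vface B m j 0))
    -- the two seed squares are pullbacks
    (h0 : IsPullbackSq (hface B 1 0 0) (vface B 0 1 0) (vface B 0 0 0) (hface B 0 0 0))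
    (h1 : IsPullbackSq (hface B 1 0 1) (vface B 0 1 1) (vface B 0 0 1) (hface B 0 0 1)) :
    -- face-face squares, except the two excluded families
    (∀ (i j : ℕ) (k : Fin (j + 2)) (l : Fin (i + 2)),
      ¬(k = 0 ∧ l = Fin.last (i + 1)) → ¬(k = Fin.last (j + 1) ∧ l = 0) →
      IsPullbackSq (hface B (i + 1) j k) (vface B i (j + 1) l)
        (vface B i j l) (hface B i j k)) ∧
    -- horizontal degeneracy against vertical face
    (∀ (i j : ℕ) (k : Fin (j + 1)) (l : Fin (i + 2)),
      IsPullbackSq (hdeg B (i + 1) j k) (vface B i j l)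
        (vface B i (j + 1) l) (hdeg B i j k)) ∧
    -- horizontal face against vertical degeneracy
    (∀ (i j : ℕ) (k : Fin (j + 2)) (l : Fin (i + 1)),
      IsPullbackSq (hface B i j k) (vdeg B i (j + 1) l)
        (vdeg B i j l) (hface B (i + 1) j k)) ∧
    -- degeneracy against degeneracy
    (∀ (i j : ℕ) (k : Fin (j + 1)) (l : Fin (i + 1)),
      IsPullbackSq (hdeg B i j k) (vdeg B i j l)
        (vdeg B i (j + 1) l) (hdeg B (i + 1) j k)) := by
  have FFall := DSSRAux.mainFF B hrow hcol h0 h1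
  have T3 : ∀ (i j : ℕ) (k : Fin (j + 2)) (l : Fin (i + 1)), DSSRAux.Sq B (σ l) (δ k) := by
    intro i j k l
    by_cases hk : k = Fin.last (j + 1)
    · have hδ : DSSRAux.Sq B (δ l.succ) (δ k) :=
        FFall i j k l.succ (fun h => by rw [h.1] at hk; simp [Fin.ext_iff] at hk)
          (fun h => Fin.succ_ne_zero l h.2)
      have h2 : DSSRAux.Sq B (δ l.succ ≫ σ l) (δ k) := by
        rw [δ_comp_σ_succ]; exact DSSRAux.Sq_idv B (δ k)
      exact DSSRAux.Sq_vcancel B hδ h2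
    · have hδ : DSSRAux.Sq B (δ l.castSucc) (δ k) :=
        FFall i j k l.castSucc (fun h => (Fin.castSucc_lt_last l).ne h.2)
          (fun h => hk h.1)
      have h2 : DSSRAux.Sq B (δ l.castSucc ≫ σ l) (δ k) := by
        rw [δ_comp_σ_self]; exact DSSRAux.Sq_idv B (δ k)
      exact DSSRAux.Sq_vcancel B hδ h2
  refine ⟨fun i j k l e1 e2 => FFall i j k l e1 e2, ?_, fun i j k l => T3 i j k l, ?_⟩
  · intro i j k l
    by_cases hl : l = Fin.last (i + 1)
    · have hδ : DSSRAux.Sq B (δ l) (δ k.succ) :=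
        FFall i j k.succ l (fun h => Fin.succ_ne_zero k h.1)
          (fun h => by rw [h.2] at hl; simp [Fin.ext_iff] at hl)
      have h2 : DSSRAux.Sq B (δ l) (δ k.succ ≫ σ k) := by
        rw [δ_comp_σ_succ]; exact DSSRAux.Sq_idh B (δ l)
      exact DSSRAux.Sq_hcancel B hδ h2
    · have hδ : DSSRAux.Sq B (δ l) (δ k.castSucc) :=
        FFall i j k.castSucc l (fun h => hl h.2)
          (fun h => (Fin.castSucc_lt_last k).ne h.1)
      have h2 : DSSRAux.Sq B (δ l) (δ k.castSucc ≫ σ k) := by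
        rw [δ_comp_σ_self]; exact DSSRAux.Sq_idh B (δ l)
      exact DSSRAux.Sq_hcancel B hδ h2
  · intro i j k l
    have h2 : DSSRAux.Sq B (σ l) (δ k.castSucc ≫ σ k) := by
      rw [δ_comp_σ_self]; exact DSSRAux.Sq_idh B (σ l)
    exact DSSRAux.Sq_hcancel B (T3 i j k.castSucc l) h2
end
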